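/- arXiv:cs/0701076 — 3 statements merged into one kernel-verified Lean document; each statement's English description precedes it below -/
import Mathlib

section
/- Solution of the cons-tail recursion time-complexity recurrence (core of the Bounding Lemma): Let E be a type, ξ : E → E, and P0, P1 : E → ℕ be ξ-monotone, i.e. P0 ρ ≤ P0 (ξ ρ) and P1 ρ ≤ P1 (ξ ρ) for all ρ ∈ E. Let C, ℓ : ℕ and let c, p : ℕ → E → ℕ satisfy, for all ρ ∈ E and n ∈ ℕ: c 0 ρ ≤ C, p 0 ρ = 0, c (n+1) ρ ≤ P0 ρ + c n (ξ ρ), and p (n+1) ρ ≤ max (P1 ρ) (ℓ + p n (ξ ρ)). Then for all n ≥ 1 and all ρ ∈ E: c n ρ ≤ n · P0 (ξ^[n−1] ρ) + C and p n ρ ≤ n·ℓ + P1 (ξ^[n−1] ρ), where ξ^[m] denotes the m-fold iterate of ξ. -/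
/-- Solution of the cons-tail recursion time-complexity recurrence
    (core of the Bounding Lemma). -/
theorem cons_tail_recurrence_bound
    {E : Type*} (ξ : E → E) (P0 P1 : E → ℕ)
    (hP0 : ∀ ρ : E, P0 ρ ≤ P0 (ξ ρ))
    (hP1 : ∀ ρ : E, P1 ρ ≤ P1 (ξ ρ))
    (C ℓ : ℕ) (c p : ℕ → E → ℕ)
    (hc0 : ∀ ρ : E, c 0 ρ ≤ C)
    (hp0 : ∀ ρ : E, p 0 ρ = 0)
    (hcS : ∀ (n : ℕ) (ρ : E), c (n + 1) ρ ≤ P0 ρ + c n (ξ ρ))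
    (hpS : ∀ (n : ℕ) (ρ : E), p (n + 1) ρ ≤ max (P1 ρ) (ℓ + p n (ξ ρ))) :
    ∀ n : ℕ, 1 ≤ n → ∀ ρ : E,
      c n ρ ≤ n * P0 (ξ^[n - 1] ρ) + C ∧
      p n ρ ≤ n * ℓ + P1 (ξ^[n - 1] ρ) := by
  have hP0it : ∀ (k : ℕ) (ρ : E), P0 ρ ≤ P0 (ξ^[k] ρ) := by
    intro k
    induction k with
    | zero => intro ρ; simp
    | succ k ih =>
      intro ρ
      rw [Function.iterate_succ_apply]
      exact (hP0 ρ).trans (ih (ξ ρ))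
  have hP1it : ∀ (k : ℕ) (ρ : E), P1 ρ ≤ P1 (ξ^[k] ρ) := by
    intro k
    induction k with
    | zero => intro ρ; simp
    | succ k ih =>
      intro ρ
      rw [Function.iterate_succ_apply]
      exact (hP1 ρ).trans (ih (ξ ρ))
  intro n
  induction n with
  | zero => intro h; omega
  | succ n ih =>
    intro _ ρ
    rcases Nat.eq_zero_or_pos n with hn | hn
    · subst hn
      constructor
      · calc c 1 ρ ≤ P0 ρ + c 0 (ξ ρ) := hcS 0 ρ
          _ ≤ P0 ρ + C := by gcongr; exact hc0 _
          _ = 1 * P0 (ξ^[0] ρ) + C := by simp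
      · calc p 1 ρ ≤ max (P1 ρ) (ℓ + p 0 (ξ ρ)) := hpS 0 ρ
          _ = max (P1 ρ) ℓ := by rw [hp0, Nat.add_zero]
          _ ≤ 1 * ℓ + P1 (ξ^[0] ρ) := by simp
    · obtain ⟨hcn, hpn⟩ := ih hn (ξ ρ)
      have hiter : ξ^[n - 1] (ξ ρ) = ξ^[n] ρ := by
        rw [← Function.iterate_succ_apply]
        congr 1
        omega
      rw [hiter] at hcn hpn
      have h0 := hP0it n ρ
      have h1 := hP1it n ρ
      constructor
      · calc c (n + 1) ρ ≤ P0 ρ + c n (ξ ρ) := hcS n ρ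
          _ ≤ P0 (ξ^[n] ρ) + (n * P0 (ξ^[n] ρ) + C) := by gcongr
          _ = (n + 1) * P0 (ξ^[n + 1 - 1] ρ) + C := by
              simp only [Nat.add_sub_cancel]; ring
      · calc p (n + 1) ρ ≤ max (P1 ρ) (ℓ + p n (ξ ρ)) := hpS n ρ
          _ ≤ max (P1 (ξ^[n] ρ)) (ℓ + (n * ℓ + P1 (ξ^[n] ρ))) := by gcongr
          _ ≤ (n + 1) * ℓ + P1 (ξ^[n + 1 - 1] ρ) := by
              simp only [Nat.add_sub_cancel]
              apply max_le <;> nlinarith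
end

section
/- Solution of the recursion-in-an-argument recurrence, oracular case: Let E be a type, ξ : E → E, P1 : E → ℕ with P1 ρ ≤ P1 (ξ ρ) for all ρ, and P0 : E → ℕ → ℕ such that P0 is monotone in its second argument and P0 ρ z ≤ P0 (ξ ρ) z for all ρ ∈ E, z ∈ ℕ. Let C : ℕ and let c, p : ℕ → E → ℕ satisfy, for all ρ and n: c 0 ρ ≤ C, p 0 ρ = 0, c (n+1) ρ ≤ P0 ρ (p n (ξ ρ)) + c n (ξ ρ), and p (n+1) ρ ≤ max (P1 ρ) (p n (ξ ρ)). Then for all n ≥ 1 and all ρ ∈ E: p n ρ ≤ P1 (ξ^[n−1] ρ) and c n ρ ≤ n · P0 (ξ^[n−1] ρ) (P1 (ξ^[n−1] ρ)) + C, where ξ^[m] denotes the m-fold iterate of ξ. -/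
/-- Solution of the recursion-in-an-argument recurrence, oracular case. -/
theorem rec_in_arg_recurrence_oracular
    {E : Type*} (ξ : E → E) (P1 : E → ℕ)
    (hP1 : ∀ ρ : E, P1 ρ ≤ P1 (ξ ρ))
    (P0 : E → ℕ → ℕ)
    (hP0mono : ∀ (ρ : E) ⦃z z' : ℕ⦄, z ≤ z' → P0 ρ z ≤ P0 ρ z')
    (hP0ξ : ∀ (ρ : E) (z : ℕ), P0 ρ z ≤ P0 (ξ ρ) z)
    (C : ℕ) (c p : ℕ → E → ℕ)
    (hc0 : ∀ ρ : E, c 0 ρ ≤ C)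
    (hp0 : ∀ ρ : E, p 0 ρ = 0)
    (hcS : ∀ (n : ℕ) (ρ : E), c (n + 1) ρ ≤ P0 ρ (p n (ξ ρ)) + c n (ξ ρ))
    (hpS : ∀ (n : ℕ) (ρ : E), p (n + 1) ρ ≤ max (P1 ρ) (p n (ξ ρ))) :
    ∀ n : ℕ, 1 ≤ n → ∀ ρ : E,
      p n ρ ≤ P1 (ξ^[n - 1] ρ) ∧
      c n ρ ≤ n * P0 (ξ^[n - 1] ρ) (P1 (ξ^[n - 1] ρ)) + C := by
  have hP1iter : ∀ (k : ℕ) (ρ : E), P1 ρ ≤ P1 (ξ^[k] ρ) := by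
    intro k
    induction k with
    | zero => intro ρ; simp
    | succ k ih =>
      intro ρ
      rw [Function.iterate_succ_apply]
      exact (hP1 ρ).trans (ih (ξ ρ))
  have hP0iter : ∀ (k : ℕ) (ρ : E) (z : ℕ), P0 ρ z ≤ P0 (ξ^[k] ρ) z := by
    intro k
    induction k with
    | zero => intro ρ z; simp
    | succ k ih =>
      intro ρ z
      rw [Function.iterate_succ_apply]
      exact (hP0ξ ρ z).trans (ih (ξ ρ) z)
  intro n hn
  induction n with
  | zero => omega
  | succ n ih =>
    intro ρ
    rcases Nat.eq_zero_or_pos n with h0 | hpos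
    · subst h0
      simp only [Nat.add_sub_cancel, Function.iterate_one]
      constructor
      · calc p 1 ρ ≤ max (P1 ρ) (p 0 (ξ ρ)) := hpS 0 ρ
          _ = P1 ρ := by rw [hp0]; simp
      · calc c 1 ρ ≤ P0 ρ (p 0 (ξ ρ)) + c 0 (ξ ρ) := hcS 0 ρ
          _ ≤ P0 ρ (P1 ρ) + C := by
              gcongr
              · exact hP0mono ρ (by rw [hp0]; exact Nat.zero_le _)
              · exact hc0 (ξ ρ)
          _ = 1 * P0 ρ (P1 ρ) + C := by ring
    · obtain ⟨hpξ, hcξ⟩ := ih hpos (ξ ρ)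
      have hiter : ξ^[n - 1] (ξ ρ) = ξ^[n] ρ := by
        rw [← Function.iterate_succ_apply]
        congr 1
        omega
      rw [hiter] at hpξ hcξ
      simp only [Nat.add_sub_cancel]
      constructor
      · calc p (n + 1) ρ ≤ max (P1 ρ) (p n (ξ ρ)) := hpS n ρ
          _ ≤ P1 (ξ^[n] ρ) := max_le (hP1iter n ρ) hpξ
      · calc c (n + 1) ρ ≤ P0 ρ (p n (ξ ρ)) + c n (ξ ρ) := hcS n ρ
          _ ≤ P0 (ξ^[n] ρ) (P1 (ξ^[n] ρ)) +
              (n * P0 (ξ^[n] ρ) (P1 (ξ^[n] ρ)) + C) := by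
              gcongr
              exact (hP0mono ρ hpξ).trans (hP0iter n ρ _)
          _ = (n + 1) * P0 (ξ^[n] ρ) (P1 (ξ^[n] ρ)) + C := by ring
end

section
/- Solution of the recursion-in-an-argument recurrence, computational case: Let E be a type, ξ : E → E, P1, q : E → ℕ with P1 ρ ≤ P1 (ξ ρ), q ρ ≤ q (ξ ρ), and q ρ ≤ P1 ρ for all ρ, and P0 : E → ℕ → ℕ monotone in its second argument with P0 ρ z ≤ P0 (ξ ρ) z for all ρ, z. Let C : ℕ and let c, p : ℕ → E → ℕ satisfy, for all ρ and n: c 0 ρ ≤ C, p 0 ρ = 0, c (n+1) ρ ≤ P0 ρ (p n (ξ ρ)) + c n (ξ ρ), and p (n+1) ρ ≤ max (P1 ρ) (q ρ + p n (ξ ρ)). Then for all n ≥ 1 and all ρ ∈ E: p n ρ ≤ (n−1) · q (ξ^[n−1] ρ) + P1 (ξ^[n−1] ρ) and c n ρ ≤ n · P0 (ξ^[n−1] ρ) ((n−1) · q (ξ^[n−1] ρ) + P1 (ξ^[n−1] ρ)) + C, where ξ^[m] denotes the m-fold iterate of ξ. -/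
/-- Solution of the recursion-in-an-argument recurrence, computational case. -/
theorem rec_in_arg_recurrence_computational
    {E : Type*} (ξ : E → E) (P1 q : E → ℕ)
    (hP1 : ∀ ρ : E, P1 ρ ≤ P1 (ξ ρ))
    (hq : ∀ ρ : E, q ρ ≤ q (ξ ρ))
    (hqP1 : ∀ ρ : E, q ρ ≤ P1 ρ)
    (P0 : E → ℕ → ℕ)
    (hP0mono : ∀ (ρ : E) ⦃z z' : ℕ⦄, z ≤ z' → P0 ρ z ≤ P0 ρ z')
    (hP0ξ : ∀ (ρ : E) (z : ℕ), P0 ρ z ≤ P0 (ξ ρ) z)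
    (C : ℕ) (c p : ℕ → E → ℕ)
    (hc0 : ∀ ρ : E, c 0 ρ ≤ C)
    (hp0 : ∀ ρ : E, p 0 ρ = 0)
    (hcS : ∀ (n : ℕ) (ρ : E), c (n + 1) ρ ≤ P0 ρ (p n (ξ ρ)) + c n (ξ ρ))
    (hpS : ∀ (n : ℕ) (ρ : E), p (n + 1) ρ ≤ max (P1 ρ) (q ρ + p n (ξ ρ))) :
    ∀ n : ℕ, 1 ≤ n → ∀ ρ : E,
      p n ρ ≤ (n - 1) * q (ξ^[n - 1] ρ) + P1 (ξ^[n - 1] ρ) ∧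
      c n ρ ≤ n * P0 (ξ^[n - 1] ρ) ((n - 1) * q (ξ^[n - 1] ρ) + P1 (ξ^[n - 1] ρ)) + C := by
  have hP1it : ∀ (k : ℕ) (ρ : E), P1 ρ ≤ P1 (ξ^[k] ρ) := by
    intro k
    induction k with
    | zero => intro ρ; simp
    | succ k ih =>
      intro ρ
      rw [Function.iterate_succ_apply]
      exact (hP1 ρ).trans (ih (ξ ρ))
  have hqit : ∀ (k : ℕ) (ρ : E), q ρ ≤ q (ξ^[k] ρ) := by
    intro k
    induction k with
    | zero => intro ρ; simp
    | succ k ih =>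
      intro ρ
      rw [Function.iterate_succ_apply]
      exact (hq ρ).trans (ih (ξ ρ))
  have hP0it : ∀ (k : ℕ) (ρ : E) (z : ℕ), P0 ρ z ≤ P0 (ξ^[k] ρ) z := by
    intro k
    induction k with
    | zero => intro ρ z; simp
    | succ k ih =>
      intro ρ z
      rw [Function.iterate_succ_apply]
      exact (hP0ξ ρ z).trans (ih (ξ ρ) z)
  intro n
  induction n with
  | zero => intro h; omega
  | succ n ih =>
    intro _ ρ
    rcases Nat.eq_zero_or_pos n with hn | hn
    · subst hn
      simp only [Nat.add_sub_cancel, Function.iterate_zero, id_eq]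
      constructor
      · have := hpS 0 ρ
        rw [hp0 (ξ ρ)] at this
        simpa using this.trans (by simp [hqP1 ρ])
      · have h1 := hcS 0 ρ
        rw [hp0 (ξ ρ)] at h1
        have : c 1 ρ ≤ P0 ρ (0 * q ρ + P1 ρ) + C :=
          h1.trans (Nat.add_le_add (hP0mono ρ (by simp)) (hc0 (ξ ρ)))
        simpa using this
    · have IH := ih hn (ξ ρ)
      have hiter : ξ^[n - 1] (ξ ρ) = ξ^[n] ρ := by
        rw [← Function.iterate_succ_apply]
        congr 1
        omega
      rw [hiter] at IH
      simp only [Nat.add_sub_cancel]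
      set σ := ξ^[n] ρ with hσ
      have hpbound : p n (ξ ρ) ≤ n * q σ + P1 σ := by
        refine IH.1.trans ?_
        have : (n - 1) * q σ ≤ n * q σ := Nat.mul_le_mul_right _ (by omega)
        omega
      constructor
      · refine (hpS n ρ).trans (max_le ?_ ?_)
        · exact le_add_of_le_right ((hP1it n ρ).trans (le_refl _))
        · have hqσ : q ρ ≤ q σ := hqit n ρ
          have hkey : q σ + (n - 1) * q σ = n * q σ := by
            obtain ⟨m, rfl⟩ : ∃ m, n = m + 1 := ⟨n - 1, by omega⟩
            simp [Nat.succ_mul, Nat.add_comm]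
          calc q ρ + p n (ξ ρ) ≤ q σ + ((n - 1) * q σ + P1 σ) :=
                Nat.add_le_add hqσ IH.1
            _ = n * q σ + P1 σ := by rw [← add_assoc, hkey]
      · have hB : (n - 1) * q σ + P1 σ ≤ n * q σ + P1 σ := by
          have : (n - 1) * q σ ≤ n * q σ := Nat.mul_le_mul_right _ (by omega)
          omega
        calc c (n + 1) ρ ≤ P0 ρ (p n (ξ ρ)) + c n (ξ ρ) := hcS n ρ
          _ ≤ P0 σ (n * q σ + P1 σ) + (n * P0 σ ((n - 1) * q σ + P1 σ) + C) :=
              Nat.add_le_add ((hP0mono ρ hpbound).trans (hP0it n ρ _)) IH.2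
          _ ≤ P0 σ (n * q σ + P1 σ) + (n * P0 σ (n * q σ + P1 σ) + C) :=
              Nat.add_le_add_left (Nat.add_le_add_right
                (Nat.mul_le_mul_left _ (hP0mono σ hB)) C) _
          _ = (n + 1) * P0 σ (n * q σ + P1 σ) + C := by ring
end
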